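/- arXiv:2210.06549 — 2 statements merged into one kernel-verified Lean document; each statement's English description precedes it below -/
import Mathlib

section
/- General Manipulability Theorem: Let (F ∪ W, ⊐, h, ≻) be a matching game induced by a stable matching rule h on a many-to-many matching market in which every agent's preference is substitutable and satisfies the law of aggregate demand (LAD). Then every agent a ∈ F ∪ W satisfies the manipulability property with Blair order: if h(≻)(a) ≠ μ_X(≻)(a) (where X = F if a ∈ F and X = W if a ∈ W), then there exists a preference ≻'_a such that h(≻_{-a}, ≻'_a)(a) ≻_a^B h(≻)(a). -/
/-!
Common framework for many-to-many matching markets (Manasero–Oviedo,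
"General Manipulability Theorem for a Matching Model").

Agents on each side have strict linear orders (strict total orders) over
finsets of the other side.  `Pref.Ch` is the choice function, selecting the
most preferred subset.
-/

/-- A strict preference of an agent over subsets of the (finite) set `α` of
potential partners: a strict total order on `Finset α`, where `gt S T` means
`S` is strictly preferred to `T`. -/
structure Pref (α : Type*) [DecidableEq α] [Fintype α] where
  gt : Finset α → Finset α → Prop
  isSTO : IsStrictTotalOrder (Finset α) gt

namespace Pref

variable {α : Type*} [DecidableEq α] [Fintype α]

/-- The choice set `Ch(S, ≻)`: the `≻`-maximal subset of `S`. -/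
noncomputable def Ch (p : Pref α) (S : Finset α) : Finset α := by
  classical
  haveI := p.isSTO
  haveI : IsStrictTotalOrder (Finset α) (Function.swap p.gt) := IsStrictTotalOrder.swap _
  exact @Finset.max' _ (linearOrderOfSTO (Function.swap p.gt)) S.powerset
    ⟨∅, Finset.empty_mem_powerset S⟩

/-- Substitutability: if `w ∈ Ch(S)` then `w ∈ Ch(S \ {w'})` for any other `w' ∈ S`. -/
def Substitutable (p : Pref α) : Prop :=
  ∀ (S : Finset α) (w w' : α), w ∈ S → w' ∈ S → w ≠ w' →
    w ∈ p.Ch S → w ∈ p.Ch (S.erase w')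

/-- Law of aggregate demand: `Y ⊆ X` implies `|Ch(Y)| ≤ |Ch(X)|`. -/
def LAD (p : Pref α) : Prop :=
  ∀ Y X : Finset α, Y ⊆ X → (p.Ch Y).card ≤ (p.Ch X).card

/-- `p.HasList L` : the sets in `L` are exactly the acceptable sets, in strictly
decreasing order of preference and all preferred to `∅`; any set not in the
list (other than `∅`) is unacceptable, i.e. worse than `∅`. -/
def HasList (p : Pref α) (L : List (Finset α)) : Prop :=
  List.Chain' p.gt (L ++ [∅]) ∧ ∀ S : Finset α, S ∉ L → S ≠ ∅ → p.gt ∅ S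

/-- `q`-separability of a preference with quota `q`. -/
def QSeparable (p : Pref α) (q : ℕ) : Prop :=
  (∀ S : Finset α, q < S.card → p.gt ∅ S) ∧
  (∀ (S : Finset α) (v : α), v ∉ S → S.card < q → (p.gt (insert v S) S ↔ p.gt {v} ∅))

end Pref

/-- `p'` is the restriction `p |_T` of `p` to `T`:
(i) any set not contained in `T` is worse than `∅`;
(ii) for `S ⊆ T`, `S ≻' ∅ ↔ S ≻ ∅`;
(iii) for `S, S' ⊆ T`, `S ≻' S' ↔ S ≻ S'`. -/
def IsRestriction {α : Type*} [DecidableEq α] [Fintype α]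
    (p : Pref α) (T : Finset α) (p' : Pref α) : Prop :=
  (∀ S : Finset α, ¬ S ⊆ T → p'.gt ∅ S) ∧
  (∀ S : Finset α, S ⊆ T → (p'.gt S ∅ ↔ p.gt S ∅)) ∧
  (∀ S S' : Finset α, S ⊆ T → S' ⊆ T → (p'.gt S S' ↔ p.gt S S'))

variable (F W : Type*) [DecidableEq F] [Fintype F] [DecidableEq W] [Fintype W]

/-- A (many-to-many) matching between firms `F` and workers `W`. -/
structure Matching where
  fm : F → Finset W
  wm : W → Finset F
  compat : ∀ f w, w ∈ fm f ↔ f ∈ wm w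

/-- A preference profile: one preference for each firm and each worker. -/
structure Profile where
  fp : F → Pref W
  wp : W → Pref F

variable {F W}

/-- All agents' preferences are substitutable. -/
def Profile.Substitutable (P : Profile F W) : Prop :=
  (∀ f, (P.fp f).Substitutable) ∧ (∀ w, (P.wp w).Substitutable)

/-- All agents' preferences satisfy the law of aggregate demand. -/
def Profile.LAD (P : Profile F W) : Prop :=
  (∀ f, (P.fp f).LAD) ∧ (∀ w, (P.wp w).LAD)

/-- The profile obtained from `P` by replacing firm `f`'s preference by `p`. -/
def Profile.updateFirm (P : Profile F W) (f : F) (p : Pref W) : Profile F W :=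
  ⟨Function.update P.fp f p, P.wp⟩

/-- The profile obtained from `P` by replacing worker `w`'s preference by `p`. -/
def Profile.updateWorker (P : Profile F W) (w : W) (p : Pref F) : Profile F W :=
  ⟨P.fp, Function.update P.wp w p⟩

/-- Individual rationality: every agent chooses its whole assignment. -/
def IndRational (P : Profile F W) (μ : Matching F W) : Prop :=
  (∀ f, (P.fp f).Ch (μ.fm f) = μ.fm f) ∧ (∀ w, (P.wp w).Ch (μ.wm w) = μ.wm w)

/-- The pair `(w, f)` blocks the matching `μ`. -/
def Blocks (P : Profile F W) (μ : Matching F W) (w : W) (f : F) : Prop :=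
  w ∉ μ.fm f ∧ w ∈ (P.fp f).Ch (insert w (μ.fm f)) ∧ f ∈ (P.wp w).Ch (insert f (μ.wm w))

/-- (Pairwise) stability. -/
def Stable (P : Profile F W) (μ : Matching F W) : Prop :=
  IndRational P μ ∧ ∀ w f, ¬ Blocks P μ w f

/-- `μF` is the firm-optimal stable matching for `P`. -/
def FirmOptimal (P : Profile F W) (μF : Matching F W) : Prop :=
  Stable P μF ∧ ∀ μ, Stable P μ → ∀ f, μF.fm f = μ.fm f ∨ (P.fp f).gt (μF.fm f) (μ.fm f)

/-- `μW` is the worker-optimal stable matching for `P`. -/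
def WorkerOptimal (P : Profile F W) (μW : Matching F W) : Prop :=
  Stable P μW ∧ ∀ μ, Stable P μ → ∀ w, μW.wm w = μ.wm w ∨ (P.wp w).gt (μW.wm w) (μ.wm w)

/-- Firm `f` satisfies the manipulability property (w.r.t. the rule `h`, the true
profile `P` and the firm-optimal stable matching `μF`): if `h(≻)(f) ≠ μF(≻)(f)`
then some report `≻'_f` (in the domain: substitutable and LAD) gives `f` a
strictly `≻_f`-better assignment. -/
def FirmManip (h : Profile F W → Matching F W) (P : Profile F W)
    (μF : Matching F W) (f : F) : Prop :=
  (h P).fm f ≠ μF.fm f → ∃ p' : Pref W, p'.Substitutable ∧ p'.LAD ∧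
    (P.fp f).gt ((h (P.updateFirm f p')).fm f) ((h P).fm f)

/-- Firm `f` satisfies the manipulability property with Blair order. -/
def FirmManipB (h : Profile F W → Matching F W) (P : Profile F W)
    (μF : Matching F W) (f : F) : Prop :=
  (h P).fm f ≠ μF.fm f → ∃ p' : Pref W, p'.Substitutable ∧ p'.LAD ∧
    ((P.fp f).Ch ((h (P.updateFirm f p')).fm f ∪ (h P).fm f) = (h (P.updateFirm f p')).fm f ∧
      (h (P.updateFirm f p')).fm f ≠ (h P).fm f)

/-- Worker `w` satisfies the manipulability property. -/
def WorkerManip (h : Profile F W → Matching F W) (P : Profile F W)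
    (μW : Matching F W) (w : W) : Prop :=
  (h P).wm w ≠ μW.wm w → ∃ p' : Pref F, p'.Substitutable ∧ p'.LAD ∧
    (P.wp w).gt ((h (P.updateWorker w p')).wm w) ((h P).wm w)

/-- Worker `w` satisfies the manipulability property with Blair order. -/
def WorkerManipB (h : Profile F W → Matching F W) (P : Profile F W)
    (μW : Matching F W) (w : W) : Prop :=
  (h P).wm w ≠ μW.wm w → ∃ p' : Pref F, p'.Substitutable ∧ p'.LAD ∧
    ((P.wp w).Ch ((h (P.updateWorker w p')).wm w ∪ (h P).wm w) = (h (P.updateWorker w p')).wm w ∧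
      (h (P.updateWorker w p')).wm w ≠ (h P).wm w)

/-!
Following Hatfield and Milgrom, stable matchings are fixed points of a monotone operator on
contract sets. Its greatest fixed point yields a stable matching `μs` that every firm
Blair-prefers, and every worker Blair-disprefers, to any other stable matching; so `μs` agrees
with `μ_F` on the firms' side. Under the law of aggregate demand, comparing the number of
contracts counted on both sides then gives the rural hospitals theorem.

If `h(≻)(f) ≠ μ_F(≻)(f) = μs(f)`, firm `f` reports the truncation that chooses `S ∩ μs(f)` from
every `S`. The matching `μs` stays stable, so by the rural hospitals theorem every stable
matching of the new market, in particular the one `h` picks, gives `f` exactly `μs(f)`, which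
`f` Blair-prefers to `h(≻)(f)`. The workers' case is the firms' case in the market with the two
sides exchanged.
-/

open Finset

namespace Pref

variable {α : Type*} [DecidableEq α] [Fintype α] (p : Pref α)

theorem ch_subset (S : Finset α) : p.Ch S ⊆ S := by
  classical
  have := p.isSTO
  exact mem_powerset.mp
    (@Finset.max'_mem _ (linearOrderOfSTO (Function.swap p.gt)) S.powerset _)

theorem gt_ch {S T : Finset α} (hT : T ⊆ S) (hne : T ≠ p.Ch S) : p.gt (p.Ch S) T := by
  classical
  have := p.isSTO
  exact @lt_of_le_of_ne _ (linearOrderOfSTO (Function.swap p.gt)).toPartialOrder T _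
    (@Finset.le_max' _ (linearOrderOfSTO (Function.swap p.gt)) S.powerset T
      (mem_powerset.mpr hT)) hne

theorem not_gt_of_gt {S T : Finset α} (h : p.gt S T) : ¬ p.gt T S := by
  have := p.isSTO
  exact fun h' => irrefl S (_root_.trans h h')

theorem ch_eq_of_ch_subset {S T : Finset α} (hST : p.Ch S ⊆ T) (hTS : T ⊆ S) :
    p.Ch T = p.Ch S := by
  by_contra hne
  exact p.not_gt_of_gt (p.gt_ch ((p.ch_subset T).trans hTS) hne) (p.gt_ch hST (Ne.symm hne))

theorem ch_ch (S : Finset α) : p.Ch (p.Ch S) = p.Ch S :=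
  p.ch_eq_of_ch_subset subset_rfl (p.ch_subset S)

theorem ch_insert_ch {S : Finset α} {x : α} (hx : x ∈ S) : p.Ch (insert x (p.Ch S)) = p.Ch S :=
  p.ch_eq_of_ch_subset (subset_insert _ _) (insert_subset hx (p.ch_subset S))

theorem eq_or_gt_of_ch_union_eq {A B : Finset α} (h : p.Ch (A ∪ B) = A) :
    A = B ∨ p.gt A B := by
  by_cases hAB : A = B
  · exact Or.inl hAB
  · have := p.gt_ch (S := A ∪ B) subset_union_right (by rw [h]; exact Ne.symm hAB)
    exact Or.inr (h ▸ this)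

variable {p}

theorem Substitutable.mem_ch_of_subset (hp : p.Substitutable) {S T : Finset α} (hST : S ⊆ T)
    {w : α} (hwS : w ∈ S) (hwT : w ∈ p.Ch T) : w ∈ p.Ch S := by
  obtain ⟨t, rfl⟩ : ∃ t, T = S ∪ t := ⟨T \ S, (union_sdiff_of_subset hST).symm⟩
  clear hST
  induction t using Finset.induction_on with
  | empty => simpa using hwT
  | insert x t hxt ih =>
    rw [union_insert] at hwT
    by_cases hx : x ∈ S ∪ t
    · exact ih (insert_eq_of_mem hx ▸ hwT)
    · have hwx : w ≠ x := fun h => hx (mem_union_left _ (h ▸ hwS))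
      refine ih ?_
      rw [← erase_insert hx]
      exact hp _ w x (mem_insert_of_mem (mem_union_left _ hwS))
        (mem_insert_self _ _) hwx hwT

theorem Substitutable.ch_eq_of_forall_not_mem_ch_insert (hp : p.Substitutable)
    {M S : Finset α} (hM : p.Ch M = M) (hMS : M ⊆ S)
    (hS : ∀ x ∈ S, x ∉ M → x ∉ p.Ch (insert x M)) : p.Ch S = M := by
  have hch : p.Ch S ⊆ M := fun x hx => by
    by_contra hxM
    have hxS := p.ch_subset S hx
    exact hS x hxS hxM
      (hp.mem_ch_of_subset (insert_subset hxS hMS) (mem_insert_self x M) hx)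
  rw [← p.ch_eq_of_ch_subset hch hMS, hM]

def ofKey {β : Type*} [LinearOrder β] (key : Finset α → β) (hkey : Function.Injective key) :
    Pref α where
  gt S T := key S < key T
  isSTO :=
    { trichotomous := fun _ _ hST hTS => hkey (le_antisymm (not_lt.mp hTS) (not_lt.mp hST))
      irrefl := fun S => lt_irrefl (key S)
      trans := fun _ _ _ => lt_trans }

theorem ch_ofKey {β : Type*} [LinearOrder β] {key : Finset α → β}
    (hkey : Function.Injective key) {S M : Finset α} (hMS : M ⊆ S)
    (hM : ∀ T ⊆ S, T ≠ M → key M < key T) :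
    (ofKey key hkey).Ch S = M := by
  by_contra hne
  exact (ofKey key hkey).not_gt_of_gt (hM _ ((ofKey key hkey).ch_subset S) hne)
    ((ofKey key hkey).gt_ch hMS (Ne.symm hne))

noncomputable def interKey (A S : Finset α) : ℕ ×ₗ ℕ ×ₗ Fin (Fintype.card (Finset α)) :=
  toLex (#(A \ S), toLex (#(S \ A), Fintype.equivFin (Finset α) S))

theorem interKey_injective (A : Finset α) : Function.Injective (interKey A) := fun _ _ h =>
  (Fintype.equivFin (Finset α)).injective <| by
    simpa [interKey] using congrArg (fun k => (ofLex (ofLex k).2).2) h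

noncomputable def inter (A : Finset α) : Pref α := ofKey (interKey A) (interKey_injective A)

theorem ch_inter (A S : Finset α) : (inter A).Ch S = S ∩ A := by
  refine ch_ofKey _ inter_subset_left fun T hTS hne => ?_
  have hAT : A \ S ⊆ A \ T := sdiff_subset_sdiff subset_rfl hTS
  have hSA : (S ∩ A) \ A = ∅ := by simp
  simp only [interKey, Prod.Lex.toLex_lt_toLex, sdiff_inter_self_right, hSA, card_empty, card_pos]
  rcases (card_le_card hAT).lt_or_eq with hlt | heq
  · exact Or.inl hlt
  · refine Or.inr ⟨heq, Or.inl (nonempty_iff_ne_empty.mpr fun hTA => hne ?_)⟩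
    have hAT' : A \ T = A \ S := (eq_of_subset_of_card_le hAT heq.ge).symm
    refine subset_antisymm (subset_inter hTS (sdiff_eq_empty_iff_subset.mp hTA)) fun x hx => ?_
    by_contra hxT
    have hx' : x ∈ A \ S := hAT' ▸ mem_sdiff.mpr ⟨(mem_inter.mp hx).2, hxT⟩
    exact (mem_sdiff.mp hx').2 (mem_inter.mp hx).1

theorem inter_substitutable (A : Finset α) : (inter A).Substitutable := by
  intro S w w' _ _ hne hw
  rw [ch_inter, mem_inter] at hw ⊢
  exact ⟨mem_erase.mpr ⟨hne, hw.1⟩, hw.2⟩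

theorem inter_lad (A : Finset α) : (inter A).LAD := fun Y X hYX => by
  simpa only [ch_inter] using card_le_card (inter_subset_inter_right hYX)

end Pref

section Rows

variable {F W : Type*} [DecidableEq F] [DecidableEq W]

def firmRow [Fintype W] (X : Finset (F × W)) (f : F) : Finset W := {w | (f, w) ∈ X}

def workerRow [Fintype F] (X : Finset (F × W)) (w : W) : Finset F := {f | (f, w) ∈ X}

@[simp] theorem mem_firmRow [Fintype W] {X : Finset (F × W)} {f : F} {w : W} :
    w ∈ firmRow X f ↔ (f, w) ∈ X := by
  simp [firmRow]

@[simp] theorem mem_workerRow [Fintype F] {X : Finset (F × W)} {f : F} {w : W} :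
    f ∈ workerRow X w ↔ (f, w) ∈ X := by
  simp [workerRow]

theorem firmRow_mono [Fintype W] {X Y : Finset (F × W)} (h : X ⊆ Y) (f : F) :
    firmRow X f ⊆ firmRow Y f :=
  fun _ hw => mem_firmRow.mpr (h (mem_firmRow.mp hw))

theorem workerRow_mono [Fintype F] {X Y : Finset (F × W)} (h : X ⊆ Y) (w : W) :
    workerRow X w ⊆ workerRow Y w :=
  fun _ hf => mem_workerRow.mpr (h (mem_workerRow.mp hf))

end Rows

section Contracts

variable (Q : Profile F W)

noncomputable def firmRejected (X : Finset (F × W)) : Finset (F × W) :=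
  {x ∈ X | x.2 ∉ (Q.fp x.1).Ch (firmRow X x.1)}

noncomputable def workerRejected (X : Finset (F × W)) : Finset (F × W) :=
  {x ∈ X | x.1 ∉ (Q.wp x.2).Ch (workerRow X x.2)}

theorem mem_compl_firmRejected {X : Finset (F × W)} {f : F} {w : W} :
    (f, w) ∈ (firmRejected Q X)ᶜ ↔ ((f, w) ∈ X → w ∈ (Q.fp f).Ch (firmRow X f)) := by
  simp [firmRejected]

theorem mem_compl_workerRejected {X : Finset (F × W)} {f : F} {w : W} :
    (f, w) ∈ (workerRejected Q X)ᶜ ↔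
      ((f, w) ∈ X → f ∈ (Q.wp w).Ch (workerRow X w)) := by
  simp [workerRejected]

variable {Q}

theorem firmRejected_mono (hQ : Q.Substitutable) {X Y : Finset (F × W)} (h : X ⊆ Y) :
    firmRejected Q X ⊆ firmRejected Q Y := fun x hx => by
  simp only [firmRejected, mem_filter] at hx ⊢
  exact ⟨h hx.1, fun hY => hx.2 <|
    (hQ.1 x.1).mem_ch_of_subset (firmRow_mono h x.1) (mem_firmRow.mpr hx.1) hY⟩

theorem workerRejected_mono (hQ : Q.Substitutable) {X Y : Finset (F × W)} (h : X ⊆ Y) :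
    workerRejected Q X ⊆ workerRejected Q Y := fun x hx => by
  simp only [workerRejected, mem_filter] at hx ⊢
  exact ⟨h hx.1, fun hY => hx.2 <|
    (hQ.2 x.2).mem_ch_of_subset (workerRow_mono h x.2) (mem_workerRow.mpr hx.1) hY⟩

variable (Q)

/-- Fixed points `A` of this map, with `B := (firmRejected Q A)ᶜ`, are the pairs of opportunity
sets of Hatfield and Milgrom: `A` holds the contracts firms may choose from and `B` those
workers may choose from. -/
noncomputable def hmMap (hQ : Q.Substitutable) : Finset (F × W) →o Finset (F × W) where
  toFun A := (workerRejected Q (firmRejected Q A)ᶜ)ᶜ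
  monotone' _ _ h := compl_subset_compl.mpr <|
    workerRejected_mono hQ (compl_subset_compl.mpr (firmRejected_mono hQ h))

theorem hmMap_apply (hQ : Q.Substitutable) (A : Finset (F × W)) :
    hmMap Q hQ A = (workerRejected Q (firmRejected Q A)ᶜ)ᶜ := rfl

variable {Q}

theorem mem_of_hmMap_eq {hQ : Q.Substitutable} {A : Finset (F × W)} (hA : hmMap Q hQ A = A)
    {f : F} {w : W} :
    (f, w) ∈ A ↔ ((f, w) ∈ (firmRejected Q A)ᶜ →
      f ∈ (Q.wp w).Ch (workerRow (firmRejected Q A)ᶜ w)) := by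
  rw [← mem_compl_workerRejected, ← hmMap_apply Q hQ, hA]

noncomputable def matchingOfFixed {hQ : Q.Substitutable} {A : Finset (F × W)}
    (hA : hmMap Q hQ A = A) : Matching F W where
  fm f := (Q.fp f).Ch (firmRow A f)
  wm w := (Q.wp w).Ch (workerRow (firmRejected Q A)ᶜ w)
  compat f w := by
    constructor
    · intro hw
      have hA' : (f, w) ∈ A := mem_firmRow.mp ((Q.fp f).ch_subset _ hw)
      exact (mem_of_hmMap_eq hA).mp hA' ((mem_compl_firmRejected Q).mpr fun _ => hw)
    · intro hf
      have hB : (f, w) ∈ (firmRejected Q A)ᶜ := mem_workerRow.mp ((Q.wp w).ch_subset _ hf)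
      exact (mem_compl_firmRejected Q).mp hB ((mem_of_hmMap_eq hA).mpr fun _ => hf)

theorem stable_matchingOfFixed {hQ : Q.Substitutable} {A : Finset (F × W)}
    (hA : hmMap Q hQ A = A) : Stable Q (matchingOfFixed hA) := by
  refine ⟨⟨fun f => (Q.fp f).ch_ch _, fun w => (Q.wp w).ch_ch _⟩, ?_⟩
  rintro w f ⟨hnot, hwf, hfw⟩
  by_cases hfwA : (f, w) ∈ A
  · rw [matchingOfFixed, (Q.fp f).ch_insert_ch (mem_firmRow.mpr hfwA)] at hwf
    exact hnot hwf
  · have hB : (f, w) ∈ (firmRejected Q A)ᶜ := (mem_compl_firmRejected Q).mpr (absurd · hfwA)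
    rw [matchingOfFixed, (Q.wp w).ch_insert_ch (mem_workerRow.mpr hB)] at hfw
    exact hfwA ((mem_of_hmMap_eq hA).mpr fun _ => hfw)

end Contracts

section FirmOptimal

variable {Q : Profile F W}

variable (Q) in
noncomputable def workerWilling (μ : Matching F W) : Finset (F × W) :=
  {x | x.1 ∈ (Q.wp x.2).Ch (insert x.1 (μ.wm x.2))}

theorem mem_workerWilling {μ : Matching F W} {f : F} {w : W} :
    (f, w) ∈ workerWilling Q μ ↔ f ∈ (Q.wp w).Ch (insert f (μ.wm w)) := by
  simp [workerWilling]

theorem IndRational.mem_workerWilling {μ : Matching F W} (hμ : IndRational Q μ) {f : F} {w : W}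
    (hfw : f ∈ μ.wm w) : (f, w) ∈ workerWilling Q μ := by
  rw [_root_.mem_workerWilling, insert_eq_of_mem hfw, hμ.2 w]
  exact hfw

theorem ch_firmRow_workerWilling (hQ : Q.Substitutable) {μ : Matching F W} (hμ : Stable Q μ)
    (f : F) : (Q.fp f).Ch (firmRow (workerWilling Q μ) f) = μ.fm f := by
  refine (hQ.1 f).ch_eq_of_forall_not_mem_ch_insert (hμ.1.1 f)
    (fun w hw => mem_firmRow.mpr (hμ.1.mem_workerWilling ((μ.compat f w).mp hw)))
    fun w hw hwμ hwch => hμ.2 w f ⟨hwμ, hwch, mem_workerWilling.mp (mem_firmRow.mp hw)⟩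

theorem mem_compl_firmRejected_workerWilling (hQ : Q.Substitutable) {μ : Matching F W}
    (hμ : Stable Q μ) {f : F} {w : W} :
    (f, w) ∈ (firmRejected Q (workerWilling Q μ))ᶜ ↔
      ((f, w) ∈ workerWilling Q μ → f ∈ μ.wm w) := by
  rw [mem_compl_firmRejected, ch_firmRow_workerWilling hQ hμ, μ.compat]

theorem ch_workerRow_compl_firmRejected_workerWilling (hQ : Q.Substitutable)
    {μ : Matching F W} (hμ : Stable Q μ) (w : W) :
    (Q.wp w).Ch (workerRow (firmRejected Q (workerWilling Q μ))ᶜ w) = μ.wm w := by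
  refine (hQ.2 w).ch_eq_of_forall_not_mem_ch_insert (hμ.1.2 w)
    (fun f hf => mem_workerRow.mpr ((mem_compl_firmRejected_workerWilling hQ hμ).mpr fun _ => hf))
    fun f hf hfμ hfch => hfμ <|
      (mem_compl_firmRejected_workerWilling hQ hμ).mp (mem_workerRow.mp hf)
        (mem_workerWilling.mpr hfch)

theorem hmMap_workerWilling (hQ : Q.Substitutable) {μ : Matching F W} (hμ : Stable Q μ) :
    hmMap Q hQ (workerWilling Q μ) = workerWilling Q μ := by
  ext ⟨f, w⟩
  rw [hmMap_apply, mem_compl_workerRejected, ch_workerRow_compl_firmRejected_workerWilling hQ hμ,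
    mem_compl_firmRejected_workerWilling hQ hμ]
  exact ⟨fun h => by_contra fun hfw => hfw (hμ.1.mem_workerWilling (h fun h' => absurd h' hfw)),
    fun h h' => h' h⟩

variable (Q) in
def IsFirmBlairOptimal (μs : Matching F W) : Prop :=
  Stable Q μs ∧ ∀ μ, Stable Q μ →
    (∀ f, (Q.fp f).Ch (μs.fm f ∪ μ.fm f) = μs.fm f) ∧
    ∀ w, (Q.wp w).Ch (μ.wm w ∪ μs.wm w) = μ.wm w

/-- The greatest fixed point of `hmMap` gives the firms the largest opportunity set
and the workers the smallest one. -/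
theorem exists_isFirmBlairOptimal (hQ : Q.Substitutable) : ∃ μs, IsFirmBlairOptimal Q μs := by
  let _ : CompleteLattice (Finset (F × W)) := Fintype.toCompleteLattice _
  have hA := (hmMap Q hQ).map_gfp
  refine ⟨matchingOfFixed hA, stable_matchingOfFixed hA,
    fun μ hμ => ⟨fun f => ?_, fun w => ?_⟩⟩
  all_goals
    have hle : workerWilling Q μ ⊆ (hmMap Q hQ).gfp :=
      (hmMap Q hQ).le_gfp (hmMap_workerWilling hQ hμ).ge
  · refine (Q.fp f).ch_eq_of_ch_subset subset_union_left
      (union_subset ((Q.fp f).ch_subset _) ?_)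
    rw [← ch_firmRow_workerWilling hQ hμ]
    exact ((Q.fp f).ch_subset _).trans (firmRow_mono hle f)
  · have hrow := workerRow_mono (compl_subset_compl.mpr (firmRejected_mono hQ hle)) w
    rw [← ch_workerRow_compl_firmRejected_workerWilling hQ hμ]
    exact (Q.wp w).ch_eq_of_ch_subset subset_union_left
      (union_subset ((Q.wp w).ch_subset _) (((Q.wp w).ch_subset _).trans hrow))

theorem IsFirmBlairOptimal.fm_eq_of_firmOptimal {μs μF : Matching F W}
    (hμs : IsFirmBlairOptimal Q μs) (hF : FirmOptimal Q μF) (f : F) : μF.fm f = μs.fm f := by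
  rcases (Q.fp f).eq_or_gt_of_ch_union_eq ((hμs.2 μF hF.1).1 f) with h | h
  · exact h.symm
  · exact (hF.2 μs hμs.1 f).resolve_right ((Q.fp f).not_gt_of_gt h)

end FirmOptimal

section RuralHospitals

variable {Q : Profile F W}

theorem Matching.sum_card_fm_eq_sum_card_wm (μ : Matching F W) :
    ∑ f, #(μ.fm f) = ∑ w, #(μ.wm w) := by
  have hfm (f : F) : univ.bipartiteAbove (fun f w => w ∈ μ.fm f) f = μ.fm f := by ext; simp
  have hwm (w : W) : univ.bipartiteBelow (fun f w => w ∈ μ.fm f) w = μ.wm w := by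
    ext; simp [μ.compat]
  simpa only [hfm, hwm] using
    sum_card_bipartiteAbove_eq_sum_card_bipartiteBelow (s := univ) (t := univ)
      (fun f w => w ∈ μ.fm f)

theorem IsFirmBlairOptimal.card_fm_eq (hQ : Q.LAD) {μs μ : Matching F W}
    (hμs : IsFirmBlairOptimal Q μs) (hμ : Stable Q μ) (f : F) : #(μ.fm f) = #(μs.fm f) := by
  have hfirm : ∀ f, #(μ.fm f) ≤ #(μs.fm f) := fun f => by
    simpa only [hμ.1.1 f, (hμs.2 μ hμ).1 f] using
      hQ.1 f (μ.fm f) (μs.fm f ∪ μ.fm f) subset_union_right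
  have hworker : ∀ w, #(μs.wm w) ≤ #(μ.wm w) := fun w => by
    simpa only [hμs.1.1.2 w, (hμs.2 μ hμ).2 w] using
      hQ.2 w (μs.wm w) (μ.wm w ∪ μs.wm w) subset_union_right
  have hsum : ∑ f, #(μs.fm f) ≤ ∑ f, #(μ.fm f) := by
    rw [μs.sum_card_fm_eq_sum_card_wm, μ.sum_card_fm_eq_sum_card_wm]
    exact sum_le_sum fun w _ => hworker w
  exact (sum_eq_sum_iff_of_le fun f _ => hfirm f).mp
    (le_antisymm (sum_le_sum fun f _ => hfirm f) hsum) f (mem_univ f)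

/-- The rural hospitals theorem. -/
theorem card_fm_eq_of_stable (hQs : Q.Substitutable) (hQl : Q.LAD) {μ ν : Matching F W}
    (hμ : Stable Q μ) (hν : Stable Q ν) (f : F) : #(μ.fm f) = #(ν.fm f) := by
  obtain ⟨μs, hμs⟩ := exists_isFirmBlairOptimal hQs
  rw [hμs.card_fm_eq hQl hμ, hμs.card_fm_eq hQl hν]

end RuralHospitals

section Truncation

variable {Q : Profile F W}

theorem Profile.Substitutable.updateFirm (hQ : Q.Substitutable) {p : Pref W}
    (hp : p.Substitutable) (f : F) : (Q.updateFirm f p).Substitutable :=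
  ⟨(Function.forall_update_iff Q.fp fun _ q => q.Substitutable).mpr ⟨hp, fun g _ => hQ.1 g⟩,
    hQ.2⟩

theorem Profile.LAD.updateFirm (hQ : Q.LAD) {p : Pref W} (hp : p.LAD) (f : F) :
    (Q.updateFirm f p).LAD :=
  ⟨(Function.forall_update_iff Q.fp fun _ q => q.LAD).mpr ⟨hp, fun g _ => hQ.1 g⟩, hQ.2⟩

theorem Stable.updateFirm_inter {μ : Matching F W} (hμ : Stable Q μ) (f : F) :
    Stable (Q.updateFirm f (Pref.inter (μ.fm f))) μ := by
  refine ⟨⟨fun g => ?_, hμ.1.2⟩, fun w g hblock => ?_⟩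
  · rcases eq_or_ne g f with rfl | hg
    · simp [Profile.updateFirm, Pref.ch_inter]
    · simpa [Profile.updateFirm, hg] using hμ.1.1 g
  · rcases eq_or_ne g f with rfl | hg
    · exact hblock.1 (by simpa [Profile.updateFirm, Pref.ch_inter] using hblock.2.1)
    · exact hμ.2 w g (by simpa [Blocks, Profile.updateFirm, hg] using hblock)

/-- After truncating to `μ(f)`, firm `f` can only get a subset of `μ(f)`, and the rural hospitals
theorem fixes the number of workers it gets. -/
theorem Stable.fm_eq_of_stable_updateFirm_inter (hQs : Q.Substitutable) (hQl : Q.LAD)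
    {μ ν : Matching F W} (hμ : Stable Q μ) {f : F}
    (hν : Stable (Q.updateFirm f (Pref.inter (μ.fm f))) ν) : ν.fm f = μ.fm f := by
  have hsub : ν.fm f ⊆ μ.fm f := by
    have hir := hν.1.1 f
    simp only [Profile.updateFirm, Function.update_self, Pref.ch_inter] at hir
    exact hir ▸ inter_subset_right
  exact eq_of_subset_of_card_le hsub (card_fm_eq_of_stable
    (hQs.updateFirm (Pref.inter_substitutable _) f) (hQl.updateFirm (Pref.inter_lad _) f)
    (hμ.updateFirm_inter f) hν f).le

end Truncation

theorem firmManipB_of_firmOptimal {P : Profile F W} (hsub : P.Substitutable) (hlad : P.LAD)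
    {h : Profile F W → Matching F W}
    (hrule : ∀ P' : Profile F W, P'.Substitutable → P'.LAD → Stable P' (h P'))
    {μF : Matching F W} (hF : FirmOptimal P μF) (f : F) : FirmManipB h P μF f := by
  intro hne
  obtain ⟨μs, hμs⟩ := exists_isFirmBlairOptimal hsub
  have htrunc : (h (P.updateFirm f (Pref.inter (μs.fm f)))).fm f = μs.fm f :=
    hμs.1.fm_eq_of_stable_updateFirm_inter hsub hlad <| hrule _
      (hsub.updateFirm (Pref.inter_substitutable _) f) (hlad.updateFirm (Pref.inter_lad _) f)
  refine ⟨Pref.inter (μs.fm f), Pref.inter_substitutable _, Pref.inter_lad _, ?_, ?_⟩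
  · rw [htrunc]
    exact (hμs.2 _ (hrule P hsub hlad)).1 f
  · rw [htrunc, ← hμs.fm_eq_of_firmOptimal hF f]
    exact Ne.symm hne

def Matching.swap (μ : Matching F W) : Matching W F :=
  ⟨μ.wm, μ.fm, fun w f => (μ.compat f w).symm⟩

def Profile.swap (P : Profile F W) : Profile W F := ⟨P.wp, P.fp⟩

section Swap

variable {P : Profile F W}

theorem Profile.Substitutable.swap (hP : P.Substitutable) : P.swap.Substitutable := ⟨hP.2, hP.1⟩

theorem Profile.LAD.swap (hP : P.LAD) : P.swap.LAD := ⟨hP.2, hP.1⟩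

theorem Stable.swap {μ : Matching F W} (hμ : Stable P μ) : Stable P.swap μ.swap :=
  ⟨⟨hμ.1.2, hμ.1.1⟩, fun f w ⟨hnot, hf, hw⟩ =>
    hμ.2 w f ⟨fun h => hnot ((μ.compat f w).mp h), hw, hf⟩⟩

theorem WorkerOptimal.swap {μW : Matching F W} (hW : WorkerOptimal P μW) :
    FirmOptimal P.swap μW.swap :=
  ⟨hW.1.swap, fun μ hμ => hW.2 μ.swap hμ.swap⟩

theorem workerManipB_iff_firmManipB_swap (h : Profile F W → Matching F W) (μW : Matching F W)
    (w : W) : WorkerManipB h P μW w ↔ FirmManipB (fun Q => (h Q.swap).swap) P.swap μW.swap w :=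
  Iff.rfl

end Swap

/-- General Manipulability Theorem.  In the matching game induced
by a stable matching rule `h` on a market with substitutable and LAD preferences,
every agent satisfies the manipulability property with Blair order: if
`h(≻)(a) ≠ μ_X(≻)(a)` (where `X` is the agent's side), then there exists a report
`≻'_a` with `h(≻_{-a}, ≻'_a)(a) ≻_a^B h(≻)(a)`. -/
theorem stmt5 {F W : Type*} [DecidableEq F] [Fintype F] [DecidableEq W] [Fintype W]
    (P : Profile F W) (hsub : P.Substitutable) (hlad : P.LAD)
    (h : Profile F W → Matching F W)
    (hrule : ∀ P' : Profile F W, P'.Substitutable → P'.LAD → Stable P' (h P'))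
    (μF μW : Matching F W) (hF : FirmOptimal P μF) (hW : WorkerOptimal P μW) :
    (∀ f : F, FirmManipB h P μF f) ∧ (∀ w : W, WorkerManipB h P μW w) := by
  refine ⟨firmManipB_of_firmOptimal hsub hlad hrule hF, fun w => ?_⟩
  rw [workerManipB_iff_firmManipB_swap]
  exact firmManipB_of_firmOptimal hsub.swap hlad.swap
    (fun Q hQs hQl => (hrule Q.swap hQs.swap hQl.swap).swap) hW.swap w
end

section
/- Consider the many-to-one matching market with F = {f1, f2, f3}, W = {w1, w2, w3, w4} and true preferences: ≻_{f1}: {w2,w3}, {w2,w4}, {w1,w3}, {w1,w2}, {w1,w4}, {w3,w4}, {w1}, {w2}, {w3}, {w4}; ≻_{f2}: {w1}, {w2}; ≻_{f3}: {w4}, {w1}; ≻_{w1}: f1, f3, f2; ≻_{w2}: f2, f1; ≻_{w3} = ≻_{w4}: f1, f3 (these preferences are substitutable and q-separable). Then: (i) the firm-optimal stable matching μ_F(≻) assigns μ_F(f1) = {w2,w3}, μ_F(f2) = {w1}, μ_F(f3) = {w4}, and the worker-optimal stable matching μ_W(≻) assigns μ_W(f1) = {w1,w3}, μ_W(f2)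 = {w2}, μ_W(f3) = {w4}; (ii) if worker w1 misreports ≻'_{w1}: f3 (declaring only f3 acceptable), then for ≻' = (≻_{-w1}, ≻'_{w1}), the firm-optimal stable matching μ'_F = μ_F(≻') assigns μ'_F(f1) = {w3,w4}, μ'_F(f2) = {w2}, μ'_F(f3) = {w1}; (iii) μ'_F is not stable for the true profile ≻, since the pair (f1, w1) blocks it; and (iv) under the firm-optimal stable rule h_F, w1's misreport is profitable: h_F(≻')(w1) = {f3} ≻_{w1} {f2} = h_F(≻)(w1), even though h_F(≻) ≠ μ_W(≻). -/
variable (F W : Type*) [DecidableEq F] [Fintype F] [DecidableEq W] [Fintype W]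

variable {F W}

/-!
A preference given by a ranked list enters stability only through its choice function, which
picks the first listed set contained in the offered set.  Stability is therefore a decidable
property of the firms' assignments, and individual rationality confines the firms of a stable
matching to listed sets or `∅`.  So the stable matchings of both markets can be found by
exhausting the `11 · 3 · 3` such assignments, and every claim is read off from them.
-/

namespace Pref

section Lists

variable {α : Type*} [DecidableEq α]

def listCh (L : List (Finset α)) (S : Finset α) : Finset α :=
  (L.find? (· ⊆ S)).getD ∅

theorem listCh_mem_or_eq_empty (L : List (Finset α)) (S : Finset α) :
    listCh L S ∈ L ∨ listCh L S = ∅ := by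
  unfold listCh
  cases h : L.find? (· ⊆ S) with
  | none => exact Or.inr rfl
  | some T => exact Or.inl (List.mem_of_find?_eq_some h)

/-- The position of `S` in the ranking `L ++ [∅]`; `idxOf` sends every set outside it,
i.e. every unacceptable set, to the common last rank `L.length + 1`. -/
def listRank (L : List (Finset α)) (S : Finset α) : ℕ :=
  (L ++ [∅]).idxOf S

end Lists

variable {α : Type*} [DecidableEq α] [Fintype α]

instance (p : Pref α) : IsStrictTotalOrder (Finset α) p.gt := p.isSTO

theorem Ch_subset (p : Pref α) (S : Finset α) : p.Ch S ⊆ S := by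
  classical
  exact Finset.mem_powerset.mp
    (@Finset.max'_mem _ (linearOrderOfSTO (Function.swap p.gt)) _ _)

theorem gt_Ch (p : Pref α) {S A : Finset α} (hA : A ⊆ S) (hne : A ≠ p.Ch S) :
    p.gt (p.Ch S) A := by
  classical
  obtain h | h := @Finset.le_max' _ (linearOrderOfSTO (Function.swap p.gt)) S.powerset A
    (Finset.mem_powerset.mpr hA)
  exacts [absurd h hne, h]

theorem Ch_eq_of_forall_gt (p : Pref α) {S T : Finset α} (hT : T ⊆ S)
    (h : ∀ A ⊆ S, A ≠ T → p.gt T A) : p.Ch S = T := by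
  by_contra hne
  exact irrefl _ (_root_.trans (p.gt_Ch hT (Ne.symm hne)) (h _ (p.Ch_subset S) hne))

variable {p : Pref α} {L : List (Finset α)}

theorem HasList.pairwise (h : p.HasList L) : (L ++ [∅]).Pairwise p.gt :=
  List.isChain_iff_pairwise.mp h.1

theorem HasList.gt_empty (h : p.HasList L) {A : Finset α} (hA : A ∈ L) : p.gt A ∅ :=
  (List.pairwise_append.mp h.pairwise).2.2 A hA ∅ (List.mem_singleton_self _)

theorem HasList.Ch_eq_listCh (h : p.HasList L) (S : Finset α) : p.Ch S = listCh L S := by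
  unfold listCh
  cases hfind : L.find? (· ⊆ S) with
  | none =>
    refine p.Ch_eq_of_forall_gt (Finset.empty_subset S) fun A hA hne => h.2 A ?_ hne
    exact fun hAL => List.find?_eq_none.mp hfind A hAL (decide_eq_true hA)
  | some T =>
    obtain ⟨hTS, pre, post, rfl, hpre⟩ := List.find?_eq_some_iff_append.mp hfind
    have hT : T ∈ pre ++ T :: post := by simp
    have hpost : ∀ B ∈ post ++ [∅], p.gt T B := by
      have := h.pairwise
      simp only [List.append_assoc, List.cons_append, List.pairwise_append,
        List.pairwise_cons] at this
      exact this.2.1.1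
    refine p.Ch_eq_of_forall_gt (of_decide_eq_true hTS) fun A hA hne => ?_
    by_cases hAL : A ∈ pre ++ T :: post
    · have hApre : A ∉ pre := fun hApre => by simpa [hA] using hpre A hApre
      exact hpost A (by simp_all)
    · by_cases hA0 : A = ∅
      · exact hpost A (by simp [hA0])
      · exact _root_.trans (h.gt_empty hT) (h.2 A hAL hA0)

theorem HasList.gt_of_listRank_lt (h : p.HasList L) {A B : Finset α}
    (hAB : listRank L A < listRank L B) : p.gt A B := by
  unfold listRank at hAB
  have hA : A ∈ L ++ [∅] :=
    List.idxOf_lt_length_iff.mp (hAB.trans_le List.idxOf_le_length)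
  by_cases hB : B ∈ L ++ [∅]
  · have := List.pairwise_iff_get.mp h.pairwise ⟨_, List.idxOf_lt_length_iff.mpr hA⟩
      ⟨_, List.idxOf_lt_length_iff.mpr hB⟩ hAB
    rwa [List.idxOf_get, List.idxOf_get] at this
  · have hB0 : B ≠ ∅ := fun e => hB (by simp [e])
    have hBL : B ∉ L := fun hBL => hB (by simp [hBL])
    obtain hAL | rfl : A ∈ L ∨ A = ∅ := by simpa using hA
    · exact _root_.trans (h.gt_empty hAL) (h.2 B hBL hB0)
    · exact h.2 B hBL hB0

end Pref

section ListMarket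

open Pref

variable {F W : Type*} [DecidableEq F] [Fintype F] [DecidableEq W]

def Matching.ofFirms (m : F → Finset W) : Matching F W :=
  ⟨m, fun w => Finset.univ.filter (w ∈ m ·), by simp⟩

theorem Matching.ofFirms_fm (μ : Matching F W) : Matching.ofFirms μ.fm = μ := by
  obtain ⟨fm, wm, compat⟩ := μ
  simp only [Matching.ofFirms, Matching.mk.injEq, true_and]
  funext w
  ext f
  simp [compat]

variable [Fintype W]

def ListStable (LF : F → List (Finset W)) (LW : W → List (Finset F)) (μ : Matching F W) :
    Prop :=
  (∀ f, listCh (LF f) (μ.fm f) = μ.fm f) ∧ (∀ w, listCh (LW w) (μ.wm w) = μ.wm w) ∧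
    ∀ w f, w ∉ μ.fm f → w ∈ listCh (LF f) (insert w (μ.fm f)) →
      f ∉ listCh (LW w) (insert f (μ.wm w))

instance (LF : F → List (Finset W)) (LW : W → List (Finset F)) (μ : Matching F W) :
    Decidable (ListStable LF LW μ) := by
  unfold ListStable; infer_instance

variable {P : Profile F W} {LF : F → List (Finset W)} {LW : W → List (Finset F)}

theorem stable_iff_listStable (hF : ∀ f, (P.fp f).HasList (LF f))
    (hW : ∀ w, (P.wp w).HasList (LW w)) (μ : Matching F W) :
    Stable P μ ↔ ListStable LF LW μ := by
  simp only [Stable, IndRational, Blocks, ListStable, (hF _).Ch_eq_listCh,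
    (hW _).Ch_eq_listCh, not_and, and_assoc]

theorem forall_stable_of_forall_listStable (hF : ∀ f, (P.fp f).HasList (LF f))
    (hW : ∀ w, (P.wp w).HasList (LW w)) {Q : Matching F W → Prop}
    (h : ∀ m : F → Finset W, (∀ f, m f ∈ LF f ++ [∅]) →
      ListStable LF LW (Matching.ofFirms m) → Q (Matching.ofFirms m))
    (μ : Matching F W) (hμ : Stable P μ) : Q μ := by
  rw [← μ.ofFirms_fm] at hμ ⊢
  have hμ' := (stable_iff_listStable hF hW _).mp hμ
  refine h _ (fun f => ?_) hμ'
  have hIR : listCh (LF f) (μ.fm f) = μ.fm f := hμ'.1 f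
  simpa [hIR, or_comm] using listCh_mem_or_eq_empty (LF f) (μ.fm f)

theorem firmOptimal_of_listRank (hF : ∀ f, (P.fp f).HasList (LF f))
    (hW : ∀ w, (P.wp w).HasList (LW w)) {μF : Matching F W} (hμF : ListStable LF LW μF)
    (h : ∀ m : F → Finset W, (∀ f, m f ∈ LF f ++ [∅]) →
      ListStable LF LW (Matching.ofFirms m) →
        ∀ f, μF.fm f = m f ∨ listRank (LF f) (μF.fm f) < listRank (LF f) (m f)) :
    FirmOptimal P μF :=
  ⟨(stable_iff_listStable hF hW μF).mpr hμF, fun μ hμ f =>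
    (forall_stable_of_forall_listStable hF hW (Q := fun μ => ∀ f, μF.fm f = μ.fm f ∨
      listRank (LF f) (μF.fm f) < listRank (LF f) (μ.fm f)) h μ hμ f).imp_right
        (hF f).gt_of_listRank_lt⟩

theorem workerOptimal_of_listRank (hF : ∀ f, (P.fp f).HasList (LF f))
    (hW : ∀ w, (P.wp w).HasList (LW w)) {μW : Matching F W} (hμW : ListStable LF LW μW)
    (h : ∀ m : F → Finset W, (∀ f, m f ∈ LF f ++ [∅]) →
      ListStable LF LW (Matching.ofFirms m) → ∀ w, μW.wm w = (Matching.ofFirms m).wm w ∨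
        listRank (LW w) (μW.wm w) < listRank (LW w) ((Matching.ofFirms m).wm w)) :
    WorkerOptimal P μW :=
  ⟨(stable_iff_listStable hF hW μW).mpr hμW, fun μ hμ w =>
    (forall_stable_of_forall_listStable hF hW (Q := fun μ => ∀ w, μW.wm w = μ.wm w ∨
      listRank (LW w) (μW.wm w) < listRank (LW w) (μ.wm w)) h μ hμ w).imp_right
        (hW w).gt_of_listRank_lt⟩

end ListMarket

/-- The list-bounded quantifiers let `decide` run through the listed assignments only, instead of
all maps `Fin 3 → α`. -/
theorem Fin.forall_pi_three_of_forall_mem {α : Type*} {s : Fin 3 → List α}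
    {R : (Fin 3 → α) → Prop} (h : ∀ a ∈ s 0, ∀ b ∈ s 1, ∀ c ∈ s 2, R ![a, b, c])
    (m : Fin 3 → α) (hm : ∀ i, m i ∈ s i) : R m := by
  convert h _ (hm 0) _ (hm 1) _ (hm 2)
  ext i
  fin_cases i <;> rfl

def exampleFirmLists : Fin 3 → List (Finset (Fin 4)) :=
  ![[{1, 2}, {1, 3}, {0, 2}, {0, 1}, {0, 3}, {2, 3}, {0}, {1}, {2}, {3}], [{0}, {1}], [{3}, {0}]]

def exampleWorkerLists : Fin 4 → List (Finset (Fin 3)) :=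
  ![[{0}, {2}, {1}], [{1}, {0}], [{0}, {2}], [{0}, {2}]]

def exampleWorkerLists' : Fin 4 → List (Finset (Fin 3)) :=
  Function.update exampleWorkerLists 0 [{2}]

/-- Example of Section 4.  Many-to-one market with
`F = {f₁, f₂, f₃}` (encoded `Fin 3`, `fᵢ = i - 1`) and `W = {w₁, w₂, w₃, w₄}`
(encoded `Fin 4`, `wⱼ = j - 1`), with the substitutable, `q`-separable true
preferences of the paper.  Then:
(i) the firm-optimal stable matching `μF` is `f₁ ↦ {w₂, w₃}, f₂ ↦ {w₁}, f₃ ↦ {w₄}`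
and the worker-optimal stable matching `μW` is `f₁ ↦ {w₁, w₃}, f₂ ↦ {w₂}, f₃ ↦ {w₄}`;
(ii) if `w₁` misreports `≻'_{w₁} : f₃`, the firm-optimal stable matching `μF'` of the
misreported profile is `f₁ ↦ {w₃, w₄}, f₂ ↦ {w₂}, f₃ ↦ {w₁}`;
(iii) `μF'` is not stable for the true profile: `(f₁, w₁)` blocks it;
(iv) the misreport is profitable for `w₁` under the firm-optimal stable rule:
`μF'(w₁) = {f₃} ≻_{w₁} {f₂} = μF(w₁)`, even though `μF(w₁) ≠ μW(w₁)`. -/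
theorem stmt10 (P : Profile (Fin 3) (Fin 4))
    (hf1 : (P.fp 0).HasList
      [{1, 2}, {1, 3}, {0, 2}, {0, 1}, {0, 3}, {2, 3}, {0}, {1}, {2}, {3}])
    (hf2 : (P.fp 1).HasList [{0}, {1}])
    (hf3 : (P.fp 2).HasList [{3}, {0}])
    (hw1 : (P.wp 0).HasList [{0}, {2}, {1}])
    (hw2 : (P.wp 1).HasList [{1}, {0}])
    (hw3 : (P.wp 2).HasList [{0}, {2}])
    (hw4 : (P.wp 3).HasList [{0}, {2}])
    (p' : Pref (Fin 3)) (hp' : p'.HasList [{2}]) :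
    ∃ μF μW μF' : Matching (Fin 3) (Fin 4),
      -- (i)
      FirmOptimal P μF ∧ WorkerOptimal P μW ∧
      μF.fm 0 = {1, 2} ∧ μF.fm 1 = {0} ∧ μF.fm 2 = {3} ∧
      μW.fm 0 = {0, 2} ∧ μW.fm 1 = {1} ∧ μW.fm 2 = {3} ∧
      -- (ii)
      FirmOptimal (P.updateWorker 0 p') μF' ∧
      μF'.fm 0 = {2, 3} ∧ μF'.fm 1 = {1} ∧ μF'.fm 2 = {0} ∧
      -- (iii)
      ¬ Stable P μF' ∧ Blocks P μF' 0 0 ∧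
      -- (iv)
      μF'.wm 0 = {2} ∧ μF.wm 0 = {1} ∧
      (P.wp 0).gt (μF'.wm 0) (μF.wm 0) ∧ μF.wm 0 ≠ μW.wm 0 := by
  have hF : ∀ f, (P.fp f).HasList (exampleFirmLists f) := by
    intro f; fin_cases f <;> assumption
  have hW : ∀ w, (P.wp w).HasList (exampleWorkerLists w) := by
    intro w; fin_cases w <;> assumption
  have hW' : ∀ w, ((P.updateWorker 0 p').wp w).HasList (exampleWorkerLists' w) := by
    intro w; fin_cases w <;> assumption
  have hblock : Blocks P (Matching.ofFirms ![{2, 3}, {1}, {0}]) 0 0 := by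
    simp only [Blocks, (hF 0).Ch_eq_listCh, (hW 0).Ch_eq_listCh]
    decide
  have hμF : FirmOptimal P (Matching.ofFirms ![{1, 2}, {0}, {3}]) :=
    firmOptimal_of_listRank hF hW (by decide) (Fin.forall_pi_three_of_forall_mem (by decide))
  have hμW : WorkerOptimal P (Matching.ofFirms ![{0, 2}, {1}, {3}]) :=
    workerOptimal_of_listRank hF hW (by decide) (Fin.forall_pi_three_of_forall_mem (by decide))
  have hμF' : FirmOptimal (P.updateWorker 0 p') (Matching.ofFirms ![{2, 3}, {1}, {0}]) :=
    firmOptimal_of_listRank (P := P.updateWorker 0 p') hF hW' (by decide)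
      (Fin.forall_pi_three_of_forall_mem (by decide))
  refine ⟨_, _, _, hμF, hμW, rfl, rfl, rfl, rfl, rfl, rfl, hμF', rfl, rfl, rfl,
    fun h => h.2 0 0 hblock, hblock, by decide, by decide,
    (hW 0).gt_of_listRank_lt (by decide), by decide⟩
end
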